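/- arXiv:2012.07031 — 2 statements merged into one kernel-verified Lean document; each statement's English description precedes it below -/
import Mathlib

section
/- Let F_∞ : ℝ^N × ℝ → ℝ be measurable with |F_∞(x,t)| ≤ (c₀/2)t² for all (x,t) and F_∞(x,t)/t² → 0 as |t| → ∞ uniformly in x. Let (u_n), (v̄_n) be measurable functions on a ball B_R ⊂ ℝ^N with u_n = ‖u_n‖·v̄_n where ‖u_n‖ → +∞, v̄_n → v̄ a.e. in B_R, and v̄_n → v̄ in L²(B_R). Then ∫_{B_R} F_∞(x,u_n)/‖u_n‖² dx → 0. -/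
/-!
Since `F x t = o(t²)` uniformly in `x`, for every `δ > 0` there is `M` with
`|F x t| ≤ δ t² + c M²` for all `x, t`. Hence `|∫ F(x, s g) / s²| ≤ δ ∫ g² + c M² μ(B) / s²`.
The first term is small because `∫ v̄ₙ²` stays bounded under L² convergence, and the second
vanishes as `s → ∞`.
-/

open MeasureTheory Filter Topology

theorem abs_le_mul_sq_add_of_subquadratic {f : ℝ → ℝ} {c ε M : ℝ}
    (hb : ∀ t, |f t| ≤ c * t ^ 2) (hM : ∀ t, M ≤ |t| → |f t| ≤ ε * t ^ 2) (hε : 0 ≤ ε)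
    (t : ℝ) : |f t| ≤ ε * t ^ 2 + c * M ^ 2 := by
  have hc : 0 ≤ c := (abs_nonneg _).trans (by simpa using hb 1)
  rcases le_or_gt M |t| with hle | hlt
  · nlinarith [hM t hle, sq_nonneg M]
  · have ht : t ^ 2 ≤ M ^ 2 := sq_abs t ▸ pow_le_pow_left₀ (abs_nonneg t) hlt.le 2
    nlinarith [hb t, sq_nonneg t]

section Integral

variable {α : Type*} [MeasurableSpace α] {μ : Measure α}

theorem norm_integral_div_sq_le [IsFiniteMeasure μ] {F : α → ℝ → ℝ} {c ε M s : ℝ}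
    {g : α → ℝ} (hFb : ∀ x t, |F x t| ≤ c * t ^ 2)
    (hM : ∀ x t, M ≤ |t| → |F x t| ≤ ε * t ^ 2) (hε : 0 ≤ ε) (hs : s ≠ 0)
    (hg : MemLp g 2 μ) :
    ‖∫ x, F x (s * g x) / s ^ 2 ∂μ‖ ≤
      ε * ∫ x, g x ^ 2 ∂μ + c * M ^ 2 / s ^ 2 * μ.real Set.univ := by
  have hs2 : 0 < s ^ 2 := by positivity
  have hpt : ∀ x, ‖F x (s * g x) / s ^ 2‖ ≤ ε * g x ^ 2 + c * M ^ 2 / s ^ 2 := by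
    intro x
    rw [Real.norm_eq_abs, abs_div, abs_of_pos hs2, div_le_iff₀ hs2]
    calc |F x (s * g x)| ≤ ε * (s * g x) ^ 2 + c * M ^ 2 :=
          abs_le_mul_sq_add_of_subquadratic (hFb x) (hM x) hε _
      _ = (ε * g x ^ 2 + c * M ^ 2 / s ^ 2) * s ^ 2 := by field_simp
  calc ‖∫ x, F x (s * g x) / s ^ 2 ∂μ‖
      ≤ ∫ x, ε * g x ^ 2 + c * M ^ 2 / s ^ 2 ∂μ :=
        norm_integral_le_of_norm_le ((hg.integrable_sq.const_mul ε).add (integrable_const _))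
          (Eventually.of_forall hpt)
    _ = ε * ∫ x, g x ^ 2 ∂μ + c * M ^ 2 / s ^ 2 * μ.real Set.univ := by
        rw [integral_add (hg.integrable_sq.const_mul ε) (integrable_const _),
          integral_const_mul, integral_const, smul_eq_mul, mul_comm (μ.real _)]

theorem eventually_integral_sq_le_of_tendsto_integral_sq_sub {ι : Type*} {l : Filter ι}
    {g : ι → α → ℝ} {v : α → ℝ} (hg : ∀ n, MemLp (g n) 2 μ) (hv : MemLp v 2 μ)
    (h : Tendsto (fun n => ∫ x, (g n x - v x) ^ 2 ∂μ) l (𝓝 0)) :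
    ∀ᶠ n in l, ∫ x, g n x ^ 2 ∂μ ≤ 2 * ∫ x, v x ^ 2 ∂μ + 2 := by
  filter_upwards [h.eventually (gt_mem_nhds one_pos)] with n hn
  have hsub : Integrable (fun x => (g n x - v x) ^ 2) μ := ((hg n).sub hv).integrable_sq
  calc ∫ x, g n x ^ 2 ∂μ ≤ ∫ x, 2 * (g n x - v x) ^ 2 + 2 * v x ^ 2 ∂μ :=
        integral_mono_of_nonneg (Eventually.of_forall fun x => sq_nonneg _)
          ((hsub.const_mul 2).add (hv.integrable_sq.const_mul 2))
          (Eventually.of_forall fun x => by nlinarith [sq_nonneg (g n x - 2 * v x)])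
    _ = 2 * ∫ x, (g n x - v x) ^ 2 ∂μ + 2 * ∫ x, v x ^ 2 ∂μ := by
        rw [integral_add (hsub.const_mul 2) (hv.integrable_sq.const_mul 2),
          integral_const_mul, integral_const_mul]
    _ ≤ 2 * ∫ x, v x ^ 2 ∂μ + 2 := by linarith

theorem tendsto_integral_div_sq_of_subquadratic [IsFiniteMeasure μ] {ι : Type*}
    {l : Filter ι} {F : α → ℝ → ℝ} {c C : ℝ} (hFb : ∀ x t, |F x t| ≤ c * t ^ 2)
    (hFlim : ∀ ε > 0, ∃ M : ℝ, ∀ x t, M ≤ |t| → |F x t| ≤ ε * t ^ 2)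
    {s : ι → ℝ} (hs : Tendsto s l atTop) {g : ι → α → ℝ} (hg : ∀ n, MemLp (g n) 2 μ)
    (hC : ∀ᶠ n in l, ∫ x, g n x ^ 2 ∂μ ≤ C) :
    Tendsto (fun n => ∫ x, F x (s n * g n x) / s n ^ 2 ∂μ) l (𝓝 0) := by
  rw [NormedAddGroup.tendsto_nhds_zero]
  intro ε hε
  set δ := ε / (2 * (|C| + 1))
  have hδ : 0 < δ := by positivity
  obtain ⟨M, hM⟩ := hFlim δ hδ
  have hrem : Tendsto (fun n => c * M ^ 2 / s n ^ 2 * μ.real Set.univ) l (𝓝 0) := by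
    have hs2 : Tendsto (fun n => s n ^ 2) l atTop := by
      simpa only [sq] using hs.atTop_mul_atTop₀ hs
    simpa using (tendsto_const_nhds.div_atTop hs2).mul_const (μ.real Set.univ)
  filter_upwards [hC, hrem.eventually (gt_mem_nhds (half_pos hε)),
    hs.eventually_gt_atTop 0] with n hCn hremn hsn
  have hsmall : δ * ∫ x, g n x ^ 2 ∂μ ≤ ε / 2 :=
    calc δ * ∫ x, g n x ^ 2 ∂μ ≤ δ * (|C| + 1) := by
          gcongr; linarith [le_abs_self C]
      _ = ε / 2 := by simp only [δ]; field_simp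
  calc ‖∫ x, F x (s n * g n x) / s n ^ 2 ∂μ‖
      ≤ δ * ∫ x, g n x ^ 2 ∂μ + c * M ^ 2 / s n ^ 2 * μ.real Set.univ :=
        norm_integral_div_sq_le hFb hM hδ.le hsn.ne' (hg n)
    _ < ε / 2 + ε / 2 := add_lt_add_of_le_of_lt hsmall hremn
    _ = ε := add_halves ε

end Integral

theorem stmt5_general {N : ℕ} (R : ℝ)
    (F : EuclideanSpace ℝ (Fin N) → ℝ → ℝ) (c0 : ℝ)
    (hFb : ∀ x t, |F x t| ≤ c0 / 2 * t ^ 2)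
    (hFlim : ∀ ε > 0, ∃ M : ℝ, ∀ x t, M ≤ |t| → |F x t| ≤ ε * t ^ 2)
    (s : ℕ → ℝ) (hs : Tendsto s atTop atTop)
    (vb : ℕ → EuclideanSpace ℝ (Fin N) → ℝ) (v : EuclideanSpace ℝ (Fin N) → ℝ)
    (hvbL2 : ∀ n, MemLp (vb n) 2 (volume.restrict (Metric.ball 0 R)))
    (hvL2 : MemLp v 2 (volume.restrict (Metric.ball 0 R)))
    (u : ℕ → EuclideanSpace ℝ (Fin N) → ℝ) (hu : ∀ n x, u n x = s n * vb n x)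
    (hL2 : Tendsto (fun n => ∫ x in Metric.ball (0 : EuclideanSpace ℝ (Fin N)) R,
      (vb n x - v x) ^ 2) atTop (nhds 0)) :
    Tendsto (fun n => ∫ x in Metric.ball (0 : EuclideanSpace ℝ (Fin N)) R,
      F x (u n x) / (s n) ^ 2) atTop (nhds 0) := by
  have : IsFiniteMeasure (volume.restrict (Metric.ball (0 : EuclideanSpace ℝ (Fin N)) R)) :=
    isFiniteMeasure_restrict.2 measure_ball_lt_top.ne
  simp_rw [hu]
  exact tendsto_integral_div_sq_of_subquadratic hFb hFlim hs hvbL2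
    (eventually_integral_sq_le_of_tendsto_integral_sq_sub hvbL2 hvL2 hL2)

/-- if `|F_∞(x,t)| ≤ (c₀/2)t²`, `F_∞(x,t)/t² → 0` as `|t| → ∞` uniformly in
`x`, and `u_n = s_n·v̄_n` with `s_n = ‖u_n‖ → ∞`, `v̄_n → v̄` a.e. and in `L²(B_R)`, then
`∫_{B_R} F_∞(x,u_n)/s_n² dx → 0`. -/
theorem stmt5 {N : ℕ} (R : ℝ) (hR : 0 < R)
    (F : EuclideanSpace ℝ (Fin N) → ℝ → ℝ) (c0 : ℝ)
    (hFmeas : Measurable (Function.uncurry F))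
    (hFb : ∀ x t, |F x t| ≤ c0 / 2 * t ^ 2)
    (hFlim : ∀ ε > 0, ∃ M : ℝ, ∀ x t, M ≤ |t| → |F x t| ≤ ε * t ^ 2)
    (s : ℕ → ℝ) (hs : Tendsto s atTop atTop)
    (vb : ℕ → EuclideanSpace ℝ (Fin N) → ℝ) (v : EuclideanSpace ℝ (Fin N) → ℝ)
    (hvbmeas : ∀ n, Measurable (vb n)) (hvmeas : Measurable v)
    (hvbL2 : ∀ n, MemLp (vb n) 2 (volume.restrict (Metric.ball 0 R)))
    (hvL2 : MemLp v 2 (volume.restrict (Metric.ball 0 R)))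
    (u : ℕ → EuclideanSpace ℝ (Fin N) → ℝ) (hu : ∀ n x, u n x = s n * vb n x)
    (hae : ∀ᵐ x ∂(volume.restrict (Metric.ball (0 : EuclideanSpace ℝ (Fin N)) R)),
      Tendsto (fun n => vb n x) atTop (nhds (v x)))
    (hL2 : Tendsto (fun n => ∫ x in Metric.ball (0 : EuclideanSpace ℝ (Fin N)) R,
      (vb n x - v x) ^ 2) atTop (nhds 0)) :
    Tendsto (fun n => ∫ x in Metric.ball (0 : EuclideanSpace ℝ (Fin N)) R,
      F x (u n x) / (s n) ^ 2) atTop (nhds 0) :=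
  stmt5_general R F c0 hFb hFlim s hs vb v hvbL2 hvL2 u hu hL2
end

section
/- Let g : ℝ^N × ℝ → ℝ be measurable with |g(x,t)| ≤ c₀|t| for all (x,t), and g(x,t)/t → 0 as |t| → ∞ uniformly in x. Let (ũ_n), (ṽ_n) be measurable with ũ_n(x) = ṽ_n(x)·s_n where s_n → +∞, ṽ_n → ṽ a.e., φ ∈ C_c^∞(ℝ^N), and suppose |ṽ_n||φ| ≤ h a.e. for some h ∈ L¹(ℝ^N). Then ∫_{ℝ^N} |g(x, ũ_n(x))/ũ_n(x)| · |ṽ_n(x) φ(x)| dx → 0. -/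
open MeasureTheory Filter Topology

/-!
Dominated convergence with the bound `c₀ h`. Pointwise, where `ṽ = 0` the factor `ṽ_n φ`
tends to `0` while the quotient stays bounded by `c₀`; where `ṽ ≠ 0` we have `|ũ_n| → ∞`, so the
quotient tends to `0` uniformly in `x` while `ṽ_n φ` converges.
-/

theorem abs_div_le_of_abs_le_mul_abs {a t c : ℝ} (hc : 0 ≤ c) (h : |a| ≤ c * |t|) :
    |a / t| ≤ c := by
  rcases eq_or_ne t 0 with rfl | ht
  · simpa using hc
  · rwa [abs_div, div_le_iff₀ (abs_pos.2 ht)]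

theorem tendsto_div_self_of_tendsto_abs_atTop {ι : Type*} {l : Filter ι} {f : ℝ → ℝ}
    (hf : ∀ ε > 0, ∃ M : ℝ, ∀ t, M ≤ |t| → |f t| ≤ ε * |t|) {t : ι → ℝ}
    (ht : Tendsto (fun i => |t i|) l atTop) :
    Tendsto (fun i => f (t i) / t i) l (𝓝 0) := by
  rw [Metric.tendsto_nhds]
  intro ε hε
  obtain ⟨M, hM⟩ := hf (ε / 2) (half_pos hε)
  filter_upwards [ht.eventually_ge_atTop (max M 1)] with i hi
  have ht_pos : 0 < |t i| := one_pos.trans_le ((le_max_right _ _).trans hi)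
  calc dist (f (t i) / t i) 0 = |f (t i)| / |t i| := by rw [Real.dist_0_eq_abs, abs_div]
    _ ≤ ε / 2 := (div_le_iff₀ ht_pos).2 (hM _ ((le_max_left _ _).trans hi))
    _ < ε := half_lt_self hε

theorem tendsto_abs_mul_atTop_of_tendsto_ne_zero {ι : Type*} {l : Filter ι} {s w : ι → ℝ}
    {w₀ : ℝ} (hs : Tendsto s l atTop) (hw : Tendsto w l (𝓝 w₀)) (hw₀ : w₀ ≠ 0) :
    Tendsto (fun i => |s i * w i|) l atTop := by
  simp_rw [abs_mul]
  exact (tendsto_abs_atTop_atTop.comp hs).atTop_mul_pos (abs_pos.2 hw₀) hw.abs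

theorem tendsto_mul_zero_of_abs_le_of_tendsto {ι : Type*} {l : Filter ι} {q w : ι → ℝ}
    {c w₀ : ℝ} (hq : ∀ i, |q i| ≤ c) (hw : Tendsto w l (𝓝 w₀))
    (hq₀ : w₀ ≠ 0 → Tendsto q l (𝓝 0)) :
    Tendsto (fun i => q i * w i) l (𝓝 0) := by
  rcases eq_or_ne w₀ 0 with rfl | hw₀
  · exact bdd_le_mul_tendsto_zero' c (Eventually.of_forall hq) hw
  · simpa using (hq₀ hw₀).mul hw

theorem stmt17_general {N : ℕ} (g : EuclideanSpace ℝ (Fin N) → ℝ → ℝ) (c0 : ℝ) (hc0 : 0 < c0)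
    (hgmeas : Measurable (Function.uncurry g))
    (hgb : ∀ x t, |g x t| ≤ c0 * |t|)
    (hglim : ∀ ε > 0, ∃ M : ℝ, ∀ x t, M ≤ |t| → |g x t| ≤ ε * |t|)
    (s : ℕ → ℝ) (hs : Tendsto s atTop atTop)
    (vt : ℕ → EuclideanSpace ℝ (Fin N) → ℝ) (v : EuclideanSpace ℝ (Fin N) → ℝ)
    (hvtmeas : ∀ n, Measurable (vt n))
    (ut : ℕ → EuclideanSpace ℝ (Fin N) → ℝ) (hut : ∀ n x, ut n x = s n * vt n x)
    (hae : ∀ᵐ x ∂volume, Tendsto (fun n => vt n x) atTop (nhds (v x)))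
    (φ : EuclideanSpace ℝ (Fin N) → ℝ) (hφc : Continuous φ)
    (h : EuclideanSpace ℝ (Fin N) → ℝ) (hhint : Integrable h)
    (hdom : ∀ n, ∀ᵐ x ∂volume, |vt n x| * |φ x| ≤ h x) :
    Tendsto (fun n => ∫ x, |g x (ut n x) / ut n x| * |vt n x * φ x|) atTop (nhds 0) := by
  have hq : ∀ x t, |g x t / t| ≤ c0 := fun x t => abs_div_le_of_abs_le_mul_abs hc0.le (hgb x t)
  have hmeas : ∀ n, AEStronglyMeasurable
      (fun x => |g x (ut n x) / ut n x| * |vt n x * φ x|) volume := fun n => by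
    have hut_meas : Measurable (ut n) := by
      simpa only [← hut] using (hvtmeas n).const_mul (s n)
    have hg_meas : Measurable fun x => g x (ut n x) := hgmeas.comp (measurable_id.prodMk hut_meas)
    exact ((hg_meas.div hut_meas).abs.mul ((hvtmeas n).mul hφc.measurable).abs).aestronglyMeasurable
  have hbound : ∀ n, ∀ᵐ x ∂volume, ‖|g x (ut n x) / ut n x| * |vt n x * φ x|‖ ≤ c0 * h x :=
    fun n => by
      filter_upwards [hdom n] with x hx
      rw [Real.norm_eq_abs, abs_mul, abs_abs, abs_abs, abs_mul]
      exact mul_le_mul (hq x _) hx (by positivity) hc0.le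
  have hlim : ∀ᵐ x ∂volume,
      Tendsto (fun n => |g x (ut n x) / ut n x| * |vt n x * φ x|) atTop (𝓝 0) := by
    filter_upwards [hae] with x hx
    refine tendsto_mul_zero_of_abs_le_of_tendsto (fun n => (abs_abs _).trans_le (hq x _))
      (hx.mul_const (φ x)).abs fun hvφ => ?_
    have hv : v x ≠ 0 := left_ne_zero_of_mul (abs_ne_zero.1 hvφ)
    have hut_abs : Tendsto (fun n => |ut n x|) atTop atTop := by
      simpa only [hut] using tendsto_abs_mul_atTop_of_tendsto_ne_zero hs hx hv
    simpa using (tendsto_div_self_of_tendsto_abs_atTop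
      (fun ε hε => (hglim ε hε).imp fun M hM => hM x) hut_abs).abs
  simpa using tendsto_integral_of_dominated_convergence _ hmeas (hhint.const_mul c0) hbound hlim

/-- if `|g(x,t)| ≤ c₀|t|`, `g(x,t)/t → 0` uniformly as `|t| → ∞`,
`ũ_n = s_n·ṽ_n` with `s_n → ∞` and `ṽ_n → ṽ` a.e., and `|ṽ_n||φ| ≤ h ∈ L¹`, then
`∫ |g(x,ũ_n)/ũ_n|·|ṽ_n φ| dx → 0`. -/
theorem stmt17 {N : ℕ} (g : EuclideanSpace ℝ (Fin N) → ℝ → ℝ) (c0 : ℝ) (hc0 : 0 < c0)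
    (hgmeas : Measurable (Function.uncurry g))
    (hgb : ∀ x t, |g x t| ≤ c0 * |t|)
    (hglim : ∀ ε > 0, ∃ M : ℝ, ∀ x t, M ≤ |t| → |g x t| ≤ ε * |t|)
    (s : ℕ → ℝ) (hs : Tendsto s atTop atTop)
    (vt : ℕ → EuclideanSpace ℝ (Fin N) → ℝ) (v : EuclideanSpace ℝ (Fin N) → ℝ)
    (hvtmeas : ∀ n, Measurable (vt n)) (hvmeas : Measurable v)
    (ut : ℕ → EuclideanSpace ℝ (Fin N) → ℝ) (hut : ∀ n x, ut n x = s n * vt n x)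
    (hae : ∀ᵐ x ∂volume, Tendsto (fun n => vt n x) atTop (nhds (v x)))
    (φ : EuclideanSpace ℝ (Fin N) → ℝ) (hφc : Continuous φ) (hφs : HasCompactSupport φ)
    (h : EuclideanSpace ℝ (Fin N) → ℝ) (hhint : Integrable h)
    (hdom : ∀ n, ∀ᵐ x ∂volume, |vt n x| * |φ x| ≤ h x) :
    Tendsto (fun n => ∫ x, |g x (ut n x) / ut n x| * |vt n x * φ x|) atTop (nhds 0) :=
  stmt17_general g c0 hc0 hgmeas hgb hglim s hs vt v hvtmeas ut hut hae φ hφc h hhint hdom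
end
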